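/- Suppose K : [0,∞) → (0,∞) is differentiable with K'(t) ≤ −δK(t) for δ > 0, and let x : ℝ → ℝ be continuous with ∫_{-∞}^0 |x(s)|^{p} K(−s) ds < ∞ for some p > 0. Define F(t) = ∫_{-∞}^0 |x(t+s)|^{p} K(−s) ds. Then, wherever F is differentiable, F'(t) ≤ |x(t)|^{p} K(0) − δ F(t). -/

import Mathlib

/-!
Write `F(t) = ∫_{u ≤ t} |x u|^p K(t - u) du`. Since `e^{δ s} K(s)` is antitone on `[0, ∞)`, for
`v > t` the value `F(v)` is at most the old memory damped by `e^{-δ(v - t)}` plus the new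
contribution over `(t, v]`, which is at most `K(0) ∫_t^v |x|^p`. The right-hand side equals `F(t)`
at `v = t` and has derivative `-δ F(t) + K(0) |x t|^p` there, so comparing right difference
quotients at `t` gives the inequality.

If the integral defining `F(t)` diverges, the same bound shows it diverges at every earlier time,
so `F` takes the junk value `0` on `(-∞, t]` and `F'(t) = 0`.
-/

open MeasureTheory Filter Topology Set

theorem HasDerivAt.le_of_eventually_le_right {f g : ℝ → ℝ} {f' g' t : ℝ}
    (hf : HasDerivAt f f' t) (hg : HasDerivAt g g' t) (ht : f t = g t)
    (hle : ∀ᶠ v in 𝓝[>] t, f v ≤ g v) : f' ≤ g' := by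
  have hslope {φ : ℝ → ℝ} {φ'} (hφ : HasDerivAt φ φ' t) :
      Tendsto (slope φ t) (𝓝[>] t) (𝓝 φ') :=
    (hasDerivAt_iff_tendsto_slope.mp hφ).mono_left (nhdsGT_le_nhdsNE t)
  refine le_of_tendsto_of_tendsto (hslope hf) (hslope hg) ?_
  filter_upwards [hle, self_mem_nhdsWithin] with v hv (htv : t < v)
  rw [slope_def_field, slope_def_field, ht]
  gcongr

section Kernel

variable {K : ℝ → ℝ} {δ : ℝ}

theorem antitoneOn_exp_mul_of_deriv_le (hKdiff : Differentiable ℝ K)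
    (hKderiv : ∀ t, 0 ≤ t → deriv K t ≤ -δ * K t) :
    AntitoneOn (fun s => Real.exp (δ * s) * K s) (Ici 0) := by
  have hder (s : ℝ) : HasDerivAt (fun s => Real.exp (δ * s) * K s)
      (Real.exp (δ * s) * (δ * K s + deriv K s)) s :=
    ((((hasDerivAt_id s).const_mul δ).exp).mul (hKdiff s).hasDerivAt).congr_deriv
      (by simp only [id, mul_one]; ring)
  refine antitoneOn_of_hasDerivWithinAt_nonpos (convex_Ici 0)
    (fun s _ => (hder s).continuousAt.continuousWithinAt)
    (fun s _ => (hder s).hasDerivWithinAt) fun s hs => ?_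
  rw [interior_Ici] at hs
  have := hKderiv s (le_of_lt hs)
  exact mul_nonpos_of_nonneg_of_nonpos (Real.exp_pos _).le (by linarith)

theorem le_exp_mul_of_deriv_le (hKdiff : Differentiable ℝ K)
    (hKderiv : ∀ t, 0 ≤ t → deriv K t ≤ -δ * K t) {a b : ℝ} (ha : 0 ≤ a) (hab : a ≤ b) :
    K b ≤ Real.exp (-δ * (b - a)) * K a := by
  have := antitoneOn_exp_mul_of_deriv_le hKdiff hKderiv ha (ha.trans hab) hab
  rw [← mul_le_mul_iff_right₀ (Real.exp_pos (δ * b)), ← mul_assoc, ← Real.exp_add]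
  convert this using 3
  ring

theorem apply_sub_le_exp_mul_apply_sub (hKdiff : Differentiable ℝ K)
    (hKderiv : ∀ t, 0 ≤ t → deriv K t ≤ -δ * K t) {u t v : ℝ} (hut : u ≤ t) (htv : t ≤ v) :
    K (v - u) ≤ Real.exp (-δ * (v - t)) * K (t - u) := by
  simpa only [sub_sub_sub_cancel_right] using
    le_exp_mul_of_deriv_le hKdiff hKderiv (sub_nonneg.mpr hut) (sub_le_sub_right htv u)

theorem le_apply_zero_of_deriv_le (hKdiff : Differentiable ℝ K)
    (hKnonneg : ∀ t, 0 ≤ t → 0 ≤ K t) (hKderiv : ∀ t, 0 ≤ t → deriv K t ≤ -δ * K t)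
    (hδ : 0 ≤ δ) {s : ℝ} (hs : 0 ≤ s) : K s ≤ K 0 := by
  have := le_exp_mul_of_deriv_le hKdiff hKderiv le_rfl hs
  rw [sub_zero] at this
  refine this.trans (mul_le_of_le_one_left (hKnonneg 0 le_rfl) ?_)
  exact Real.exp_le_one_iff.mpr (mul_nonpos_of_nonpos_of_nonneg (neg_nonpos.mpr hδ) hs)

end Kernel

noncomputable def memoryIntegral (f K : ℝ → ℝ) (t : ℝ) : ℝ := ∫ u in Iic t, f u * K (t - u)

theorem integral_Iic_zero_comp_add_eq_memoryIntegral (f K : ℝ → ℝ) (t : ℝ) :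
    ∫ s in Iic 0, f (t + s) * K (-s) = memoryIntegral f K t := by
  have := (measurePreserving_add_left volume t).setIntegral_preimage_emb
    (measurableEmbedding_addLeft t) (fun u => f u * K (t - u)) (Iic t)
  simpa [preimage_const_add_Iic, memoryIntegral] using this

section Memory

variable {f K : ℝ → ℝ} {δ t v : ℝ}

theorem integrableOn_memoryIntegral_of_le (hf : Continuous f) (hf0 : ∀ u, 0 ≤ f u)
    (hKdiff : Differentiable ℝ K) (hKnonneg : ∀ s, 0 ≤ s → 0 ≤ K s)
    (hKderiv : ∀ s, 0 ≤ s → deriv K s ≤ -δ * K s)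
    (ht : IntegrableOn (fun u => f u * K (t - u)) (Iic t)) (htv : t ≤ v) :
    IntegrableOn (fun u => f u * K (v - u)) (Iic v) := by
  have hcont : Continuous fun u => f u * K (v - u) :=
    hf.mul (hKdiff.continuous.comp (continuous_const.sub continuous_id))
  rw [← Iic_union_Ioc_eq_Iic htv]
  refine IntegrableOn.union ?_ (hcont.integrableOn_Icc.mono_set Ioc_subset_Icc_self)
  refine (ht.const_mul (Real.exp (-δ * (v - t)))).mono' hcont.aestronglyMeasurable.restrict ?_
  filter_upwards [ae_restrict_mem measurableSet_Iic] with u (hu : u ≤ t)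
  rw [Real.norm_of_nonneg (mul_nonneg (hf0 u) (hKnonneg _ (by linarith))), mul_left_comm]
  exact mul_le_mul_of_nonneg_left (apply_sub_le_exp_mul_apply_sub hKdiff hKderiv hu htv) (hf0 u)

theorem memoryIntegral_le (hf : Continuous f) (hf0 : ∀ u, 0 ≤ f u)
    (hKdiff : Differentiable ℝ K) (hKnonneg : ∀ s, 0 ≤ s → 0 ≤ K s)
    (hKderiv : ∀ s, 0 ≤ s → deriv K s ≤ -δ * K s) (hδ : 0 ≤ δ)
    (ht : IntegrableOn (fun u => f u * K (t - u)) (Iic t)) (htv : t ≤ v) :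
    memoryIntegral f K v ≤
      Real.exp (-δ * (v - t)) * memoryIntegral f K t + K 0 * ∫ u in t..v, f u := by
  have hv := integrableOn_memoryIntegral_of_le hf hf0 hKdiff hKnonneg hKderiv ht htv
  calc memoryIntegral f K v
      = (∫ u in Iic t, f u * K (v - u)) + ∫ u in Ioc t v, f u * K (v - u) := by
        rw [memoryIntegral, ← Iic_union_Ioc_eq_Iic htv, setIntegral_union
          (Iic_disjoint_Ioc le_rfl) measurableSet_Ioc (hv.mono_set (Iic_subset_Iic.mpr htv))
          (hv.mono_set Ioc_subset_Iic_self)]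
    _ ≤ (∫ u in Iic t, Real.exp (-δ * (v - t)) * (f u * K (t - u)))
          + ∫ u in Ioc t v, K 0 * f u := by
        refine add_le_add (setIntegral_mono_on (hv.mono_set (Iic_subset_Iic.mpr htv))
          (ht.const_mul _) measurableSet_Iic fun u (hu : u ≤ t) => ?_)
          (setIntegral_mono_on (hv.mono_set Ioc_subset_Iic_self)
          ((hf.integrableOn_Icc.mono_set Ioc_subset_Icc_self).const_mul _) measurableSet_Ioc
          fun u hu => ?_)
        · rw [mul_left_comm]
          exact mul_le_mul_of_nonneg_left
            (apply_sub_le_exp_mul_apply_sub hKdiff hKderiv hu htv) (hf0 u)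
        · rw [mul_comm]
          exact mul_le_mul_of_nonneg_right
            (le_apply_zero_of_deriv_le hKdiff hKnonneg hKderiv hδ (by linarith [hu.2])) (hf0 u)
    _ = Real.exp (-δ * (v - t)) * memoryIntegral f K t + K 0 * ∫ u in t..v, f u := by
        rw [integral_const_mul, integral_const_mul, intervalIntegral.integral_of_le htv,
          memoryIntegral]

theorem memoryIntegral_eq_zero_of_not_integrableOn (hf : Continuous f) (hf0 : ∀ u, 0 ≤ f u)
    (hKdiff : Differentiable ℝ K) (hKnonneg : ∀ s, 0 ≤ s → 0 ≤ K s)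
    (hKderiv : ∀ s, 0 ≤ s → deriv K s ≤ -δ * K s)
    (ht : ¬IntegrableOn (fun u => f u * K (t - u)) (Iic t)) (hvt : v ≤ t) :
    memoryIntegral f K v = 0 :=
  integral_undef fun hv =>
    ht (integrableOn_memoryIntegral_of_le hf hf0 hKdiff hKnonneg hKderiv hv hvt)

theorem deriv_memoryIntegral_le (hf : Continuous f) (hf0 : ∀ u, 0 ≤ f u)
    (hKdiff : Differentiable ℝ K) (hKnonneg : ∀ s, 0 ≤ s → 0 ≤ K s)
    (hKderiv : ∀ s, 0 ≤ s → deriv K s ≤ -δ * K s) (hδ : 0 ≤ δ)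
    (hG : DifferentiableAt ℝ (memoryIntegral f K) t) :
    deriv (memoryIntegral f K) t ≤ f t * K 0 - δ * memoryIntegral f K t := by
  set G := memoryIntegral f K
  by_cases ht : IntegrableOn (fun u => f u * K (t - u)) (Iic t)
  · have hbound : HasDerivAt (fun v => Real.exp (-δ * (v - t)) * G t + K 0 * ∫ u in t..v, f u)
        (-δ * G t + K 0 * f t) t := by
      have hexp := (((hasDerivAt_id t).sub_const t).const_mul (-δ)).exp.mul_const (G t)
      have hint := (intervalIntegral.integral_hasDerivAt_right (hf.intervalIntegrable t t)
        (hf.stronglyMeasurableAtFilter _ _) hf.continuousAt).const_mul (K 0)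
      exact (hexp.add hint).congr_deriv (by simp)
    have := hG.hasDerivAt.le_of_eventually_le_right hbound (by simp) <| by
      filter_upwards [self_mem_nhdsWithin] with v (hv : t < v)
      exact memoryIntegral_le hf hf0 hKdiff hKnonneg hKderiv hδ ht hv.le
    linarith
  · have hzero (v : ℝ) (hv : v ≤ t) : G v = 0 :=
      memoryIntegral_eq_zero_of_not_integrableOn hf hf0 hKdiff hKnonneg hKderiv ht hv
    have hderiv : deriv G t = 0 :=
      (uniqueDiffWithinAt_Iic t).eq_deriv _ hG.hasDerivAt.hasDerivWithinAt
        ((hasDerivWithinAt_const t _ 0).congr hzero (hzero t le_rfl))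
    rw [hderiv, hzero t le_rfl, mul_zero, sub_zero]
    exact mul_nonneg (hf0 t) (hKnonneg 0 le_rfl)

end Memory

theorem memory_norm_differential_inequality_general (K x : ℝ → ℝ) (δ p : ℝ)
    (hδ : 0 < δ) (hp : 0 < p)
    (hKdiff : Differentiable ℝ K)
    (hKpos : ∀ t, 0 ≤ t → 0 < K t)
    (hKderiv : ∀ t, 0 ≤ t → deriv K t ≤ -δ * K t)
    (hx : Continuous x) :
    ∀ t : ℝ,
      DifferentiableAt ℝ (fun t => ∫ s in Set.Iic (0 : ℝ), |x (t + s)| ^ p * K (-s)) t →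
      deriv (fun t => ∫ s in Set.Iic (0 : ℝ), |x (t + s)| ^ p * K (-s)) t ≤
        |x t| ^ p * K 0 - δ * ∫ s in Set.Iic (0 : ℝ), |x (t + s)| ^ p * K (-s) := by
  simp_rw [integral_Iic_zero_comp_add_eq_memoryIntegral (fun u => |x u| ^ p) K]
  exact fun t => deriv_memoryIntegral_le (hx.abs.rpow_const fun _ => Or.inr hp.le)
    (fun u => Real.rpow_nonneg (abs_nonneg _) p) hKdiff (fun s hs => (hKpos s hs).le) hKderiv
    hδ.le

theorem memory_norm_differential_inequality (K x : ℝ → ℝ) (δ p : ℝ)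
    (hδ : 0 < δ) (hp : 0 < p)
    (hKdiff : Differentiable ℝ K)
    (hKpos : ∀ t, 0 ≤ t → 0 < K t)
    (hKderiv : ∀ t, 0 ≤ t → deriv K t ≤ -δ * K t)
    (hx : Continuous x)
    (hint : IntegrableOn (fun s => |x s| ^ p * K (-s)) (Set.Iic 0)) :
    ∀ t : ℝ,
      DifferentiableAt ℝ (fun t => ∫ s in Set.Iic (0 : ℝ), |x (t + s)| ^ p * K (-s)) t →
      deriv (fun t => ∫ s in Set.Iic (0 : ℝ), |x (t + s)| ^ p * K (-s)) t ≤
        |x t| ^ p * K 0 - δ * ∫ s in Set.Iic (0 : ℝ), |x (t + s)| ^ p * K (-s) :=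
  memory_norm_differential_inequality_general K x δ p hδ hp hKdiff hKpos hKderiv hx
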